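/- arXiv:2512.10569 — 10 statements merged into one kernel-verified Lean document; each statement's English description precedes it below -/
import Mathlib

section
/- Let a, b > 0 and k₁, k₂, c ∈ ℝ, and let f : ℝ⁴ → ℝ⁴ be the discrete Ziegler map. A point p = (x, y, z, ω) ∈ ℝ⁴ is a fixed point of f (i.e. f(p) = p) if and only if y = x, z = ω = -((k₁ + a)/a)·x, and a·c·sin x = (a·b + (a+b)·k₁ + k₂·(k₁ + a))·x. -/
/-- The discrete Ziegler map (with the non-Hamiltonian symmetry Δ = 0),
with real parameters `a b k₁ k₂ c`, acting on `(x, y, z, ω) ∈ ℝ⁴`. -/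
noncomputable def zieglerMap (a b k₁ k₂ c : ℝ) : ℝ × ℝ × ℝ × ℝ → ℝ × ℝ × ℝ × ℝ :=
  fun p =>
    (p.2.1,
     (1 / (a * b)) * (-(a + b) * k₁ * p.1 + a * k₂ * p.2.2.1 + a * c * Real.sin p.1),
     p.2.2.2,
     (1 / (a * b)) * (a * k₁ * p.1 - a * k₂ * p.2.2.1 - a * c * Real.sin p.1))

/-! At a fixed point `y = x` and `ω = z`. The coupling and sine terms cancel in the sum of the
two velocity components, which forces `x + z = -(k₁ / a) * x`; given that, the last component
equation is exactly the transcendental equation for `x`. -/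

theorem zieglerMap_snd_add_snd_snd_snd (a b k₁ k₂ c : ℝ) (hb : b ≠ 0) (x y z ω : ℝ) :
    (zieglerMap a b k₁ k₂ c (x, y, z, ω)).2.1 + (zieglerMap a b k₁ k₂ c (x, y, z, ω)).2.2.2 =
      -(k₁ / a) * x := by
  simp only [zieglerMap]
  field_simp
  ring

theorem zieglerMap_snd_snd_snd_eq_iff {a b k₁ k₂ c : ℝ} (ha : a ≠ 0) (hb : b ≠ 0) {x y z ω : ℝ}
    (hz : z = -((k₁ + a) / a) * x) :
    (zieglerMap a b k₁ k₂ c (x, y, z, ω)).2.2.2 = z ↔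
      a * c * Real.sin x = (a * b + (a + b) * k₁ + k₂ * (k₁ + a)) * x := by
  subst hz
  simp only [zieglerMap]
  field_simp
  constructor <;> intro h <;> linear_combination -h

theorem fixed_points_characterization
    (a b k₁ k₂ c : ℝ) (ha : 0 < a) (hb : 0 < b) (x y z ω : ℝ) :
    zieglerMap a b k₁ k₂ c (x, y, z, ω) = (x, y, z, ω) ↔
      (y = x ∧ z = -((k₁ + a) / a) * x ∧ ω = -((k₁ + a) / a) * x ∧
        a * c * Real.sin x = (a * b + (a + b) * k₁ + k₂ * (k₁ + a)) * x) := by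
  have ha' := ha.ne'
  have hb' := hb.ne'
  have hsum := zieglerMap_snd_add_snd_snd_snd a b k₁ k₂ c hb' x y z ω
  have hz_iff : x + z = -(k₁ / a) * x ↔ z = -((k₁ + a) / a) * x := by
    constructor <;> intro h <;> field_simp at h ⊢ <;> linarith
  constructor
  · intro hfix
    simp only [Prod.ext_iff] at hfix
    obtain ⟨hyx : y = x, hy, hωz : ω = z, hω⟩ := hfix
    subst hyx hωz
    have hz : ω = -((k₁ + a) / a) * y := hz_iff.1 (by linarith)
    exact ⟨rfl, hz, hz, (zieglerMap_snd_snd_snd_eq_iff ha' hb' hz).1 hω⟩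
  · rintro ⟨rfl, hz, hωz, hsin⟩
    obtain rfl : ω = z := hωz.trans hz.symm
    have hω := (zieglerMap_snd_snd_snd_eq_iff (y := y) (ω := ω) ha' hb' hz).2 hsin
    have hy : (zieglerMap a b k₁ k₂ c (y, y, ω, ω)).2.1 = y := by
      linarith [hz_iff.2 hz]
    exact Prod.ext rfl (Prod.ext hy (Prod.ext rfl hω))
end

section
/- Let a, b > 0, k₁, k₂ ≥ 0 and c ∈ ℝ, and let f : ℝ⁴ → ℝ⁴ be the discrete Ziegler map. Then the set of fixed points of f, namely {p ∈ ℝ⁴ : f(p) = p}, is a finite set. -/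
/-! A fixed point `(x, y, z, ω)` has `y = x`, `ω = z`; adding the two remaining equations gives
`a z = -(k₁ + a) x`, and substituting back leaves the scalar equation `x = μ sin x` with
`μ = a c / (a b + (a + b) k₁ + k₂ (k₁ + a))`. Its solutions lie in `[-|μ|, |μ|]`, and there are
only finitely many of them: otherwise they accumulate, and the identity theorem for the analytic
functions `x` and `μ sin x` would force them to agree everywhere, which fails at `x = π`. -/

open Real Set

theorem AnalyticOnNhd.finite_setOf_eq_of_subset_isCompact {𝕜 E : Type*}
    [NontriviallyNormedField 𝕜] [ConnectedSpace 𝕜] [NormedAddCommGroup E] [NormedSpace 𝕜 E]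
    {f g : 𝕜 → E} (hf : AnalyticOnNhd 𝕜 f univ) (hg : AnalyticOnNhd 𝕜 g univ) (hfg : f ≠ g)
    {K : Set 𝕜} (hK : IsCompact K) (hsub : {x | f x = g x} ⊆ K) :
    {x | f x = g x}.Finite := by
  by_contra hinf
  obtain ⟨x₀, -, hacc⟩ := Set.Infinite.exists_accPt_of_subset_isCompact hinf hK hsub
  have hfreq : ∃ᶠ x in nhdsWithin x₀ {x₀}ᶜ, f x = g x := by
    rw [frequently_nhdsWithin_iff]
    exact (accPt_iff_frequently.mp hacc).mono fun x hx ↦ ⟨hx.2, hx.1⟩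
  exact hfg (hf.eq_of_frequently_eq hg hfreq)

theorem finite_setOf_eq_mul_sin (μ : ℝ) : {x : ℝ | x = μ * sin x}.Finite := by
  refine analyticOnNhd_id.finite_setOf_eq_of_subset_isCompact
    (analyticOnNhd_const.mul analyticOnNhd_sin) (fun h ↦ ?_) (isCompact_Icc (a := -|μ|) (b := |μ|))
    fun x (hx : x = μ * sin x) ↦ abs_le.mp ?_
  · have hπ := congrFun h π
    simp only [sin_pi, mul_zero] at hπ
    exact pi_ne_zero hπ
  · calc |x| = |μ| * |sin x| := by rw [← abs_mul, ← hx]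
      _ ≤ |μ| * 1 := by gcongr; exact abs_sin_le_one x
      _ = |μ| := mul_one _

theorem setOf_zieglerMap_eq_self_subset {a b k₁ k₂ c : ℝ} (ha : a ≠ 0) (hb : b ≠ 0)
    (hK : a * b + (a + b) * k₁ + k₂ * (k₁ + a) ≠ 0) :
    {p : ℝ × ℝ × ℝ × ℝ | zieglerMap a b k₁ k₂ c p = p} ⊆
      (fun x ↦ (x, x, -((k₁ + a) / a) * x, -((k₁ + a) / a) * x)) ''
        {x | x = a * c / (a * b + (a + b) * k₁ + k₂ * (k₁ + a)) * sin x} := by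
  rintro ⟨x, y, z, w⟩ hp
  simp only [zieglerMap, Prod.mk.injEq, mem_ofPred_eq] at hp
  obtain ⟨hy, hx, hw, hz⟩ := hp
  subst y w
  rw [one_div_mul_eq_div, div_eq_iff (mul_ne_zero ha hb)] at hx hz
  have hzx : a * z = -(k₁ + a) * x :=
    mul_left_cancel₀ hb (by linear_combination -hx - hz)
  refine ⟨x, ?_, ?_⟩
  · rw [mem_ofPred_eq, div_mul_eq_mul_div, eq_div_iff hK]
    exact mul_left_cancel₀ ha (by linear_combination a * hz + (a * b + a * k₂) * hzx)
  · have hz_eq : -((k₁ + a) / a) * x = z := by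
      field_simp
      linear_combination -hzx
    simp only [hz_eq]

theorem fixed_points_finite
    (a b k₁ k₂ c : ℝ) (ha : 0 < a) (hb : 0 < b) (hk₁ : 0 ≤ k₁) (hk₂ : 0 ≤ k₂) :
    Set.Finite {p : ℝ × ℝ × ℝ × ℝ | zieglerMap a b k₁ k₂ c p = p} :=
  ((finite_setOf_eq_mul_sin _).image _).subset
    (setOf_zieglerMap_eq_self_subset ha.ne' hb.ne' (by positivity))
end

section
/- Let a, b, k₁, k₂, c be arbitrary real numbers with a ≠ 0 and b ≠ 0, and let f : ℝ⁴ → ℝ⁴ be the discrete Ziegler map. Then the set of fixed points of f is contained in the line {t·(1, 1, -((k₁+a)/a), -((k₁+a)/a)) : t ∈ ℝ} ⊂ ℝ⁴; in particular, the set of fixed points of f is not dense in ℝ⁴ for any real value of the parameters. -/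
theorem fixed_points_in_line_and_not_dense
    (a b k₁ k₂ c : ℝ) (ha : a ≠ 0) (hb : b ≠ 0) :
    {p : ℝ × ℝ × ℝ × ℝ | zieglerMap a b k₁ k₂ c p = p} ⊆
        {q : ℝ × ℝ × ℝ × ℝ |
          ∃ t : ℝ, q = (t, t, -((k₁ + a) / a) * t, -((k₁ + a) / a) * t)} ∧
      ¬ Dense {p : ℝ × ℝ × ℝ × ℝ | zieglerMap a b k₁ k₂ c p = p} := by
  have hsub : {p : ℝ × ℝ × ℝ × ℝ | zieglerMap a b k₁ k₂ c p = p} ⊆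
      {q : ℝ × ℝ × ℝ × ℝ |
        ∃ t : ℝ, q = (t, t, -((k₁ + a) / a) * t, -((k₁ + a) / a) * t)} := by
    rintro ⟨x, y, z, w⟩ hp
    simp only [zieglerMap, Set.mem_setOf_eq, Prod.mk.injEq] at hp
    obtain ⟨h1, h2, h3, h4⟩ := hp
    subst h1 h3
    -- now hp : y = x etc; here h1 : y = x so variables renamed
    refine ⟨y, ?_⟩
    have hab : a * b ≠ 0 := mul_ne_zero ha hb
    have hsum : y + w = -(k₁ / a) * y := by
      have := congrArg₂ (· + ·) h2 h4
      field_simp at this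
      ring_nf at this
      have h5 : b * (a * y + a * w + k₁ * y) = 0 := by linear_combination -this
      rcases mul_eq_zero.mp h5 with h | h
      · exact absurd h hb
      · field_simp; linarith
    have hw : w = -((k₁ + a) / a) * y := by
      field_simp at hsum ⊢
      ring_nf at hsum ⊢
      linarith
    simp [hw]
  refine ⟨hsub, ?_⟩
  intro hd
  have hC : IsClosed {p : ℝ × ℝ × ℝ × ℝ | p.2.1 = p.1} :=
    isClosed_eq (continuous_fst.comp continuous_snd) continuous_fst
  have hsubC : {p : ℝ × ℝ × ℝ × ℝ | zieglerMap a b k₁ k₂ c p = p} ⊆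
      {p : ℝ × ℝ × ℝ × ℝ | p.2.1 = p.1} := by
    intro p hp
    have := congrArg Prod.fst hp
    simpa [zieglerMap] using this
  have : ((0 : ℝ), (1 : ℝ), (0 : ℝ), (0 : ℝ)) ∈ {p : ℝ × ℝ × ℝ × ℝ | p.2.1 = p.1} := by
    have h := hd ((0 : ℝ), (1 : ℝ), (0 : ℝ), (0 : ℝ))
    exact hC.closure_subset_iff.mpr hsubC h
  simp at this
end

section
/- Let a, b > 0 and k₁, k₂, c ∈ ℝ, let f : ℝ⁴ → ℝ⁴ be the discrete Ziegler map, and set β := -((k₁ + a)/a) and α' := a·b + (a+b)·k₁ + k₂·(k₁ + a). A point p = (x, y, z, ω) ∈ ℝ⁴ satisfies f(f(p)) = p if and only if z = β·x, ω = β·y, a·c·sin x = α'·x, and a·c·sin y = α'·y. -/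
/-!
The map acts on `(x, y, z, ω)` by `(x, y, z, ω) ↦ (y, g₁(x, z), ω, g₂(x, z))` for a planar map
`g = (g₁, g₂)`, so its square applies `g` separately to `(x, z)` and to `(y, ω)`: the 2-periodic
points are the pairs of fixed points of `g`. A fixed point `(u, v)` of `g` solves a linear system
in `v` and `sin u`; the sum of its two equations forces `a v = -(k₁ + a) u`, and substituting this
back leaves the scalar condition on `sin u`.
-/

theorem apply_apply_eq_self_iff_of_interleave {α : Type*} {F : α × α × α × α → α × α × α × α}
    {g : α × α → α × α} (hF : ∀ x y z ω, F (x, y, z, ω) = (y, (g (x, z)).1, ω, (g (x, z)).2))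
    (x y z ω : α) :
    F (F (x, y, z, ω)) = (x, y, z, ω) ↔ g (x, z) = (x, z) ∧ g (y, ω) = (y, ω) := by
  simp only [hF, Prod.ext_iff]
  tauto

noncomputable def zieglerPlaneMap (a b k₁ k₂ c : ℝ) (q : ℝ × ℝ) : ℝ × ℝ :=
  ((1 / (a * b)) * (-(a + b) * k₁ * q.1 + a * k₂ * q.2 + a * c * Real.sin q.1),
   (1 / (a * b)) * (a * k₁ * q.1 - a * k₂ * q.2 - a * c * Real.sin q.1))

theorem zieglerMap_apply (a b k₁ k₂ c x y z ω : ℝ) :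
    zieglerMap a b k₁ k₂ c (x, y, z, ω) =
      (y, (zieglerPlaneMap a b k₁ k₂ c (x, z)).1, ω, (zieglerPlaneMap a b k₁ k₂ c (x, z)).2) :=
  rfl

theorem zieglerPlaneMap_eq_self_iff {a b : ℝ} (ha : a ≠ 0) (hb : b ≠ 0) (k₁ k₂ c u v : ℝ) :
    zieglerPlaneMap a b k₁ k₂ c (u, v) = (u, v) ↔
      v = -((k₁ + a) / a) * u ∧ a * c * Real.sin u = (a * b + (a + b) * k₁ + k₂ * (k₁ + a)) * u := by
  simp only [zieglerPlaneMap, Prod.mk.injEq]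
  field_simp
  constructor
  · rintro ⟨h₁, h₂⟩
    have hv : a * v = -(k₁ + a) * u := mul_left_cancel₀ hb (by linear_combination -(h₁ + a * h₂))
    exact ⟨by linear_combination hv, by linear_combination h₁ - k₂ * hv⟩
  · rintro ⟨hv, hsin⟩
    refine ⟨by linear_combination hsin + k₂ * hv, mul_left_cancel₀ ha ?_⟩
    linear_combination -hsin - (b + k₂) * hv

theorem two_periodic_points_characterization
    (a b k₁ k₂ c : ℝ) (ha : 0 < a) (hb : 0 < b) (x y z ω : ℝ) :
    zieglerMap a b k₁ k₂ c (zieglerMap a b k₁ k₂ c (x, y, z, ω)) = (x, y, z, ω) ↔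
      (z = (-((k₁ + a) / a)) * x ∧ ω = (-((k₁ + a) / a)) * y ∧
        a * c * Real.sin x = (a * b + (a + b) * k₁ + k₂ * (k₁ + a)) * x ∧
        a * c * Real.sin y = (a * b + (a + b) * k₁ + k₂ * (k₁ + a)) * y) := by
  rw [apply_apply_eq_self_iff_of_interleave (zieglerMap_apply a b k₁ k₂ c),
    zieglerPlaneMap_eq_self_iff ha.ne' hb.ne', zieglerPlaneMap_eq_self_iff ha.ne' hb.ne',
    and_and_and_comm, and_assoc]
end

section
/- Let a, b > 0 and k₁, k₂, c ∈ ℝ, and let f : ℝ⁴ → ℝ⁴ be the discrete Ziegler map. If p = (x, y, z, ω) ∈ ℝ⁴ satisfies f(f(f(p))) = p, then k₁·y = -a·(x + z) and k₂·ω = k₁·y - b·z - c·sin y. -/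
theorem three_periodic_points_constraints
    (a b k₁ k₂ c : ℝ) (ha : 0 < a) (hb : 0 < b) (x y z ω : ℝ)
    (h : zieglerMap a b k₁ k₂ c
          (zieglerMap a b k₁ k₂ c (zieglerMap a b k₁ k₂ c (x, y, z, ω))) = (x, y, z, ω)) :
    k₁ * y = -a * (x + z) ∧ k₂ * ω = k₁ * y - b * z - c * Real.sin y := by
  simp only [zieglerMap, Prod.mk.injEq] at h
  obtain ⟨h1, -, h3, -⟩ := h
  have hab : a * b ≠ 0 := by positivity
  field_simp at h1 h3
  constructor <;> nlinarith [h1, h3, mul_pos ha hb]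
end

section
/- Let a, b > 0, k₁ > 0, k₂ > 0 and c ∈ ℝ, and let f : ℝ⁴ → ℝ⁴ be the discrete Ziegler map. Then the set of 3-periodic points of f, namely {p ∈ ℝ⁴ : f(f(f(p))) = p}, is not dense in ℝ⁴. -/
theorem three_periodic_points_not_dense
    (a b k₁ k₂ c : ℝ) (ha : 0 < a) (hb : 0 < b) (hk₁ : 0 < k₁) (hk₂ : 0 < k₂) :
    ¬ Dense {p : ℝ × ℝ × ℝ × ℝ |
      zieglerMap a b k₁ k₂ c (zieglerMap a b k₁ k₂ c (zieglerMap a b k₁ k₂ c p)) = p} := by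
  intro h
  have ha' : a ≠ 0 := ha.ne'
  have hb' : b ≠ 0 := hb.ne'
  have hsub : {p : ℝ × ℝ × ℝ × ℝ |
      zieglerMap a b k₁ k₂ c (zieglerMap a b k₁ k₂ c (zieglerMap a b k₁ k₂ c p)) = p} ⊆
      {p : ℝ × ℝ × ℝ × ℝ | a * (p.1 + p.2.2.1) + k₁ * p.2.1 = 0} := by
    intro p hp
    have h1 := congrArg Prod.fst hp
    have h3 := congrArg (fun q : ℝ × ℝ × ℝ × ℝ => q.2.2.1) hp
    simp only [zieglerMap] at h1 h3
    simp only [Set.mem_setOf_eq]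
    field_simp at h1 h3
    nlinarith [h1, h3]
  have hcl : IsClosed {p : ℝ × ℝ × ℝ × ℝ | a * (p.1 + p.2.2.1) + k₁ * p.2.1 = 0} :=
    isClosed_eq (by fun_prop) continuous_const
  have hcs := hcl.closure_subset_iff.mpr hsub
  have hmem := hcs (h ((1 : ℝ), (0 : ℝ), (0 : ℝ), (0 : ℝ)))
  simp only [Set.mem_setOf_eq] at hmem
  nlinarith [hmem]
end

section
/- Let a, b, k₁, k₂, c ∈ ℝ with a ≠ 0 and b ≠ 0, and for x ∈ ℝ let J(x) be the 4×4 real matrix that is the Jacobian of the discrete Ziegler map, namely J(x) has rows (0, 1, 0, 0), (-(a+b)·k₁/(a·b) + (c/b)·cos x, 0, k₂/b, 0), (0, 0, 0, 1), (k₁/b - (c/b)·cos x, 0, -k₂/b, 0). Then the determinant of J(x) equals k₁·k₂/(a·b) for every x ∈ ℝ. -/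
/-- The Jacobian of the discrete Ziegler map at a point with first coordinate `x`. -/
noncomputable def zieglerJacobian (a b k₁ k₂ c x : ℝ) : Matrix (Fin 4) (Fin 4) ℝ :=
  !![0, 1, 0, 0;
     -(a + b) * k₁ / (a * b) + (c / b) * Real.cos x, 0, k₂ / b, 0;
     0, 0, 0, 1;
     k₁ / b - (c / b) * Real.cos x, 0, -(k₂ / b), 0]

theorem zieglerJacobian_det
    (a b k₁ k₂ c : ℝ) (ha : a ≠ 0) (hb : b ≠ 0) (x : ℝ) :
    (zieglerJacobian a b k₁ k₂ c x).det = k₁ * k₂ / (a * b) := by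
  simp [zieglerJacobian, Fin.succAbove, Matrix.det_succ_row_zero, Fin.sum_univ_succ]
  field_simp
  ring
end

section
/- Let λ ∈ ℝ with 0 < λ < 1. Then the set {x ∈ [-π, π] : sin x = λ·x} has exactly three elements: x = 0 and a pair of opposite nonzero solutions ±x₀ with x₀ ∈ (0, π). -/
/-!
Dividing by `x`, the nonzero solutions are those of `sinc x = λ`. Since `sin` is strictly concave
on `[0, π]` and vanishes at `0`, its secant slope `sinc` is strictly decreasing there, from
`sinc 0 = 1` to `sinc π = 0`; so it takes the value `λ ∈ (0, 1)` at exactly one `x₀ ∈ (0, π)`.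
Evenness of `sinc` gives the negative solution `-x₀`.
-/

open Real Set

namespace Real

theorem strictAntiOn_sinc : StrictAntiOn sinc (Icc 0 π) := by
  intro x hx y hy hxy
  have hy0 : y ≠ 0 := (hx.1.trans_lt hxy).ne'
  rw [sinc_of_ne_zero hy0]
  rcases hx.1.eq_or_lt with rfl | hx0
  · rw [sinc_zero, div_lt_one hxy]
    exact sin_lt hxy
  · simpa [sinc_of_ne_zero hx0.ne'] using strictConcaveOn_sin_Icc.secant_strict_mono
      ⟨le_rfl, pi_pos.le⟩ hx hy hx0.ne' hy0 hxy

theorem sinc_abs (x : ℝ) : sinc |x| = sinc x := by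
  rcases abs_choice x with h | h <;> simp only [h, sinc_neg]

theorem sin_eq_mul_self_iff_sinc_eq {x c : ℝ} (hx : x ≠ 0) : sin x = c * x ↔ sinc x = c := by
  rw [sinc_of_ne_zero hx, div_eq_iff hx]

end Real

theorem sin_eq_mul_self_three_solutions (lam : ℝ) (h0 : 0 < lam) (h1 : lam < 1) :
    ∃ x₀ ∈ Set.Ioo 0 Real.pi,
      {x ∈ Set.Icc (-Real.pi) Real.pi | Real.sin x = lam * x} = {-x₀, 0, x₀} := by
  have hlam : lam ∈ Ioo (sinc π) (sinc 0) := by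
    rw [sinc_zero, sinc_of_ne_zero pi_ne_zero, sin_pi, zero_div]
    exact ⟨h0, h1⟩
  obtain ⟨x₀, hx₀, hsinc⟩ := intermediate_value_Ioo' pi_pos.le continuous_sinc.continuousOn hlam
  have hx₀0 : x₀ ≠ 0 := hx₀.1.ne'
  refine ⟨x₀, hx₀, Set.ext fun x => ⟨?_, ?_⟩⟩
  · rintro ⟨hx, hsin⟩
    rcases eq_or_ne x 0 with rfl | hx0
    · simp
    have habs : |x| = x₀ := strictAntiOn_sinc.injOn ⟨abs_nonneg x, abs_le.2 hx⟩
      (Ioo_subset_Icc_self hx₀) (by rw [sinc_abs, hsinc, ← sin_eq_mul_self_iff_sinc_eq hx0, hsin])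
    rcases abs_choice x with h | h <;> simp [← habs, h]
  · rintro (rfl | rfl | rfl)
    · refine ⟨⟨by linarith [hx₀.2], by linarith [hx₀.1, pi_pos]⟩, ?_⟩
      rw [sin_eq_mul_self_iff_sinc_eq (neg_ne_zero.2 hx₀0), sinc_neg, hsinc]
    · exact ⟨⟨by linarith [pi_pos], pi_pos.le⟩, by simp⟩
    · exact ⟨⟨by linarith [hx₀.1, pi_pos], hx₀.2.le⟩, (sin_eq_mul_self_iff_sinc_eq hx₀0).2 hsinc⟩
end

section
/- Let A₁₁, A₂₂, k₁ ∈ ℝ with 0 < A₁₁ < A₂₂, and let φ₁, φ₂ : ℝ → ℝ be twice-differentiable functions satisfying, for all t ∈ ℝ, the system A₁₁·(φ₁''(t) + φ₂''(t)) = -k₁·φ₁(t) and A₁₁·φ₁''(t) + A₂₂·φ₂''(t) = 0. Then: (i) the function t ↦ A₁₁·φ₁'(t) + A₂₂·φ₂'(t) is constant; and (ii) φ₁ satisfies the harmonic oscillator equation φ₁''(t) + ω²·φ₁(t) = 0 for all t, where ω² = (k₁/A₁₁)·(A₂₂/(A₂₂ - A₁₁)). -/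
theorem exists_forall_smul_add_smul_eq_of_deriv {𝕜 G : Type*} [RCLike 𝕜] [NormedAddCommGroup G]
    [NormedSpace 𝕜 G] {f g : 𝕜 → G} {a b : 𝕜} (hf : Differentiable 𝕜 f)
    (hg : Differentiable 𝕜 g) (h : ∀ x, a • deriv f x + b • deriv g x = 0) :
    ∃ K : G, ∀ x, a • f x + b • g x = K := by
  have hderiv : ∀ x, deriv (fun x => a • f x + b • g x) x = 0 := fun x => by
    rw [(((hf x).hasDerivAt.fun_const_smul a).fun_add
      ((hg x).hasDerivAt.fun_const_smul b)).deriv, h x]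
  exact ⟨_, fun x => is_const_of_deriv_eq_zero ((hf.const_smul a).add (hg.const_smul b)) hderiv x 0⟩

theorem add_div_mul_div_sub_mul_eq_zero {K : Type*} [Field K] {a b k x y z : K} (ha : a ≠ 0)
    (hab : b - a ≠ 0) (h₁ : a * (x + y) = -k * z) (h₂ : a * x + b * y = 0) :
    x + k / a * (b / (b - a)) * z = 0 := by
  field_simp
  -- Eliminating `y` leaves `a * (b - a) * x = -k * b * z`.
  linear_combination b * h₁ - a * h₂

theorem ziegler_gravity_reduced_system_general
    (A₁₁ A₂₂ k₁ : ℝ) (hA₁₁ : 0 < A₁₁) (hA : A₁₁ < A₂₂)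
    (φ₁ φ₂ : ℝ → ℝ)
    (hφ₁' : Differentiable ℝ (deriv φ₁))
    (hφ₂' : Differentiable ℝ (deriv φ₂))
    (heq1 : ∀ t : ℝ, A₁₁ * (deriv (deriv φ₁) t + deriv (deriv φ₂) t) = -k₁ * φ₁ t)
    (heq2 : ∀ t : ℝ, A₁₁ * deriv (deriv φ₁) t + A₂₂ * deriv (deriv φ₂) t = 0) :
    (∃ K : ℝ, ∀ t : ℝ, A₁₁ * deriv φ₁ t + A₂₂ * deriv φ₂ t = K) ∧
      ∀ t : ℝ,
        deriv (deriv φ₁) t + (k₁ / A₁₁) * (A₂₂ / (A₂₂ - A₁₁)) * φ₁ t = 0 :=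
  ⟨exists_forall_smul_add_smul_eq_of_deriv hφ₁' hφ₂' heq2, fun t =>
    add_div_mul_div_sub_mul_eq_zero hA₁₁.ne' (sub_pos.mpr hA).ne' (heq1 t) (heq2 t)⟩

theorem ziegler_gravity_reduced_system
    (A₁₁ A₂₂ k₁ : ℝ) (hA₁₁ : 0 < A₁₁) (hA : A₁₁ < A₂₂)
    (φ₁ φ₂ : ℝ → ℝ)
    (hφ₁ : Differentiable ℝ φ₁) (hφ₁' : Differentiable ℝ (deriv φ₁))
    (hφ₂ : Differentiable ℝ φ₂) (hφ₂' : Differentiable ℝ (deriv φ₂))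
    (heq1 : ∀ t : ℝ, A₁₁ * (deriv (deriv φ₁) t + deriv (deriv φ₂) t) = -k₁ * φ₁ t)
    (heq2 : ∀ t : ℝ, A₁₁ * deriv (deriv φ₁) t + A₂₂ * deriv (deriv φ₂) t = 0) :
    (∃ K : ℝ, ∀ t : ℝ, A₁₁ * deriv φ₁ t + A₂₂ * deriv φ₂ t = K) ∧
      ∀ t : ℝ,
        deriv (deriv φ₁) t + (k₁ / A₁₁) * (A₂₂ / (A₂₂ - A₁₁)) * φ₁ t = 0 :=
  ziegler_gravity_reduced_system_general A₁₁ A₂₂ k₁ hA₁₁ hA φ₁ φ₂ hφ₁' hφ₂' heq1 heq2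
end

section
/- Let A₁₁, M, l₂ be positive real numbers, let k₁, F, A₁₁μ, Mμ be real numbers satisfying the ratio condition A₁₁·Mμ = A₁₁μ·M (i.e. A₁₁/M = A₁₁μ/Mμ), and let φ₁, φ₂ : ℝ → ℝ be twice-differentiable functions satisfying, for all t ∈ ℝ, the system A₁₁·(φ₁''(t) + φ₂''(t)) = -k₁·φ₁(t) - A₁₁μ·(φ₁'(t) + φ₂'(t)) and A₁₁·φ₁''(t) + (A₁₁ + M·l₂²)·φ₂''(t) = -F·l₂·sin φ₁(t) - A₁₁μ·(φ₁'(t) + φ₂'(t)) - Mμ·l₂²·φ₂'(t). Then φ₁ satisfies, for all t ∈ ℝ, the closed (φ₂-independent) damped oscillator equation φ₁''(t) + (A₁₁μ/A₁₁)·φ₁'(t) + k₁·(1/A₁₁ + 1/(M·l₂²))·φ₁(t) = (F/(M·l₂))·sin φ₁(t). -/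
theorem ziegler_stokes_friction_decoupled_oscillator
    (A₁₁ M l₂ : ℝ) (hA₁₁ : 0 < A₁₁) (hM : 0 < M) (hl₂ : 0 < l₂)
    (k₁ F A₁₁μ Mμ : ℝ) (hratio : A₁₁ * Mμ = A₁₁μ * M)
    (φ₁ φ₂ : ℝ → ℝ)
    (hφ₁ : Differentiable ℝ φ₁) (hφ₁' : Differentiable ℝ (deriv φ₁))
    (hφ₂ : Differentiable ℝ φ₂) (hφ₂' : Differentiable ℝ (deriv φ₂))
    (heq1 : ∀ t : ℝ, A₁₁ * (deriv (deriv φ₁) t + deriv (deriv φ₂) t) =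
      -k₁ * φ₁ t - A₁₁μ * (deriv φ₁ t + deriv φ₂ t))
    (heq2 : ∀ t : ℝ, A₁₁ * deriv (deriv φ₁) t + (A₁₁ + M * l₂ ^ 2) * deriv (deriv φ₂) t =
      -F * l₂ * Real.sin (φ₁ t) - A₁₁μ * (deriv φ₁ t + deriv φ₂ t) -
        Mμ * l₂ ^ 2 * deriv φ₂ t) :
    ∀ t : ℝ, deriv (deriv φ₁) t + (A₁₁μ / A₁₁) * deriv φ₁ t +
        k₁ * (1 / A₁₁ + 1 / (M * l₂ ^ 2)) * φ₁ t =
      (F / (M * l₂)) * Real.sin (φ₁ t) := by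
  intro t
  have h1 := heq1 t
  have h2 := heq2 t
  have hA : A₁₁ ≠ 0 := hA₁₁.ne'
  have hMne : M ≠ 0 := hM.ne'
  have hl : l₂ ≠ 0 := hl₂.ne'
  have hMμ : Mμ = A₁₁μ * M / A₁₁ := by field_simp; linarith [hratio]
  have hb : deriv (deriv φ₂) t =
      (k₁ * φ₁ t - F * l₂ * Real.sin (φ₁ t) - Mμ * l₂ ^ 2 * deriv φ₂ t) / (M * l₂ ^ 2) := by
    field_simp
    linear_combination h2 - h1
  have ha : deriv (deriv φ₁) t =
      (-k₁ * φ₁ t - A₁₁μ * (deriv φ₁ t + deriv φ₂ t)) / A₁₁ - deriv (deriv φ₂) t := by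
    field_simp
    linear_combination h1
  rw [ha, hb, hMμ]
  field_simp
  ring
end
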